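/- For all x1, x2, x3, x4 ∈ ℂ, the matrix X = x1·X1 + x2·X2 + x3·X3 + x4·X4 is nilpotent if and only if x1 + x2 + x4 = 0. -/
import Mathlib

open Matrix

noncomputable section

def X1 (α β : ℂ) : Matrix (Fin 4) (Fin 4) ℂ :=
  !![1,1,0,1; 1,1,0,0; α,β,0,0; 0,0,0,0]

def X2 (α β : ℂ) : Matrix (Fin 4) (Fin 4) ℂ :=
  !![1,1,0,0; 1,1,0,1; β-1,α+1,0,0; 0,0,0,0]

def X3 : Matrix (Fin 4) (Fin 4) ℂ :=
  !![0,0,0,0; 0,0,0,0; 0,0,0,1; 0,0,0,0]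

/-- The ℂ-linear span of {X1, X2, X3}. -/
def h (α β : ℂ) : Submodule ℂ (Matrix (Fin 4) (Fin 4) ℂ) :=
  Submodule.span ℂ {X1 α β, X2 α β, X3}
def X4 (α β : ℂ) : Matrix (Fin 4) (Fin 4) ℂ :=
  !![1,1,0,1/2; 1,1,0,1/2; (α+β)/2,(α+β)/2,0,(α+β)/4; 0,0,0,0]

/-- The ℂ-linear span of {X1, X2, X3, X4}. -/
def m (α β : ℂ) : Submodule ℂ (Matrix (Fin 4) (Fin 4) ℂ) :=
  Submodule.span ℂ {X1 α β, X2 α β, X3, X4 α β}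
set_option maxHeartbeats 1600000 in
/-- X = x1·X1 + x2·X2 + x3·X3 + x4·X4 is nilpotent iff x1 + x2 + x4 = 0. -/
theorem nilpotent_iff_in_m (α β : ℂ) (hαβ : α + β ≠ 0) (x1 x2 x3 x4 : ℂ) :
    IsNilpotent (x1 • X1 α β + x2 • X2 α β + x3 • X3 + x4 • X4 α β) ↔
      x1 + x2 + x4 = 0 := by
  constructor
  · intro hn
    have ht := Matrix.isNilpotent_trace_of_isNilpotent hn
    rw [isNilpotent_iff_eq_zero] at ht
    simp [Matrix.trace, Matrix.diag, X1, X2, X3, X4, Fin.sum_univ_four, Matrix.vecHead, Matrix.vecTail] at ht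
    linear_combination ht
  · intro hs
    have hx4 : x4 = -x1 - x2 := by linear_combination hs
    subst hx4
    have hX : x1 • X1 α β + x2 • X2 α β + x3 • X3 + (-x1 - x2) • X4 α β =
        !![0, 0, 0, x1/2 - x2/2;
           0, 0, 0, x2/2 - x1/2;
           x1*α + x2*(β-1) - (x1+x2)*(α+β)/2, x1*β + x2*(α+1) - (x1+x2)*(α+β)/2, 0,
             x3 - (x1+x2)*(α+β)/4;
           0, 0, 0, 0] := by
      ext i j
      fin_cases i <;> fin_cases j <;>
        simp [X1, X2, X3, X4, Matrix.add_apply, Matrix.smul_apply, Matrix.vecHead, Matrix.vecTail] <;> ring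
    rw [hX]
    refine ⟨3, ?_⟩
    rw [pow_succ, pow_succ, pow_one]
    ext i j
    fin_cases i <;> fin_cases j <;>
      simp [Matrix.mul_apply, Fin.sum_univ_four] <;> ring
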